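/- The class of languages accepted by quasi-deterministic simple (qDS) sensing 5'→3' WK automata properly includes the class of languages accepted by quasi-deterministic all-final simple (qDFS) sensing 5'→3' WK automata: the language b*ab* = { bⁱabʲ : i,j ≥ 0 } is accepted by a quasi-deterministic 1-limited (hence simple) sensing 5'→3' WK automaton, but by no quasi-deterministic all-final sensing 5'→3' WK automaton. -/

import Mathlib

open Computability

/-- The two-letter alphabet `{a, b}`. -/
inductive Letter : Type
  | a : Letter
  | b : Letter
deriving DecidableEq

instance : Fintype Letter :=
  ⟨{Letter.a, Letter.b}, fun x => by cases x <;> simp⟩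

open Letter

/-- A sensing 5'→3' Watson-Crick automaton over the alphabet `T` with state set `Q`:
an initial state `q0`, a set `F` of final states, and a transition mapping
`δ : Q × T* × T* → 2^Q` that is nonempty for only finitely many triples. -/
structure WKAutomaton (T : Type) (Q : Type) where
  q0 : Q
  F : Set Q
  δ : Q → List T → List T → Set Q
  finite_delta : {t : Q × List T × List T | (δ t.1 t.2.1 t.2.2).Nonempty}.Finite

namespace WKAutomaton

variable {T Q : Type}

/-- One computation step on configurations:
`(q, x ++ w' ++ y) ⇒ (q', w')` iff `q' ∈ δ q x y`. -/
def Step (A : WKAutomaton T Q) (c c' : Q × List T) : Prop :=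
  ∃ x y : List T, c.2 = x ++ c'.2 ++ y ∧ c'.1 ∈ A.δ c.1 x y

/-- The accepted language: words `w` with `(q₀, w) ⇒* (q_F, λ)` for some final `q_F`. -/
def Lang (A : WKAutomaton T Q) : Set (List T) :=
  {w | ∃ qf ∈ A.F, Relation.ReflTransGen A.Step (A.q0, w) (qf, [])}

/-- `A` is deterministic: in every configuration at most one computation step
(choice of `x`, `y`, `w'`, `q'`) is applicable. -/
def Deterministic (A : WKAutomaton T Q) : Prop :=
  ∀ (q : Q) (w x₁ y₁ w₁ x₂ y₂ w₂ : List T) (q₁ q₂ : Q),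
    w = x₁ ++ w₁ ++ y₁ → q₁ ∈ A.δ q x₁ y₁ →
    w = x₂ ++ w₂ ++ y₂ → q₂ ∈ A.δ q x₂ y₂ →
    x₁ = x₂ ∧ y₁ = y₂ ∧ w₁ = w₂ ∧ q₁ = q₂

/-- `A` is quasi-deterministic: for every configuration `(q,w)`, whenever
`(q,w) ⇒ (p,u)` and `(q,w) ⇒ (r,v)`, it holds that `p = r`. -/
def QuasiDet (A : WKAutomaton T Q) : Prop :=
  ∀ (q : Q) (w : List T) (p r : Q) (u v : List T),
    A.Step (q, w) (p, u) → A.Step (q, w) (r, v) → p = r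

/-- `A` is state-deterministic: for every state `q` there is at most one state `p`
with `p ∈ δ(q,u,v)` for some words `u`, `v`. -/
def StateDet (A : WKAutomaton T Q) : Prop :=
  ∀ (q p₁ p₂ : Q) (u₁ v₁ u₂ v₂ : List T),
    p₁ ∈ A.δ q u₁ v₁ → p₂ ∈ A.δ q u₂ v₂ → p₁ = p₂

/-- `A` is stateless: `Q = F = {q₀}`. -/
def Stateless (A : WKAutomaton T Q) : Prop :=
  (∀ q : Q, q = A.q0) ∧ A.F = {A.q0}

/-- `A` is all-final: `Q = F`. -/
def AllFinal (A : WKAutomaton T Q) : Prop := A.F = Set.univ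

/-- `A` is simple: at most one head reads in each step. -/
def Simple (A : WKAutomaton T Q) : Prop :=
  ∀ (q : Q) (u v : List T), (A.δ q u v).Nonempty → u = [] ∨ v = []

/-- `A` is 1-limited: exactly one letter is read in each step. -/
def OneLimited (A : WKAutomaton T Q) : Prop :=
  ∀ (q : Q) (u v : List T), (A.δ q u v).Nonempty →
    (u = [] ∧ v.length = 1) ∨ (u.length = 1 ∧ v = [])

end WKAutomaton

/-- Equality of languages modulo the empty word. -/
def EqModLambda {T : Type} (L₁ L₂ : Set (List T)) : Prop :=
  ∀ w : List T, w ≠ [] → (w ∈ L₁ ↔ w ∈ L₂)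

/-- `L` is accepted (modulo the empty word) by some sensing 5'→3' WK automaton
with a finite state set satisfying the property `P`. -/
def AcceptsWith (T : Type) (P : ∀ Q : Type, WKAutomaton T Q → Prop)
    (L : Set (List T)) : Prop :=
  ∃ (Q : Type) (_ : Finite Q) (A : WKAutomaton T Q), P Q A ∧ EqModLambda A.Lang L

/-- The language `b*ab*`. -/
def Lbab : Set (List Letter) :=
  {w | ∃ i j : ℕ, w = List.replicate i b ++ a :: List.replicate j b}

/-!
In an all-final automaton a computation may be stopped right after its first step that reads
something; the letters `x`, `y` read by that step then form an accepted word `x ++ y`. Each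
transition reads at most `K` letters, so on `bᴺ a bᴺ` with `N > K` both `x` and `y` consist of
`b`s only, and no nonempty word of `b`s lies in `b*ab*`. On the other hand `b*ab*` is recognised
by the DFA counting the letters `a`, and a DFA run by the left head alone is a
quasi-deterministic 1-limited WK automaton.
-/

namespace WKAutomaton

variable {T Q : Type}

theorem OneLimited.simple {A : WKAutomaton T Q} (h : A.OneLimited) : A.Simple := fun q u v hne =>
  (h q u v hne).imp And.left And.right

theorem step_of_mem_delta {A : WKAutomaton T Q} {q p : Q} {x y : List T} (h : p ∈ A.δ q x y)
    (w : List T) : A.Step (q, x ++ w ++ y) (p, w) :=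
  ⟨x, y, rfl, h⟩

theorem exists_read_length_le (A : WKAutomaton T Q) :
    ∃ K, ∀ q x y, (A.δ q x y).Nonempty → x.length ≤ K ∧ y.length ≤ K := by
  obtain ⟨K, hK⟩ := (A.finite_delta.image fun t => t.2.1.length + t.2.2.length).bddAbove
  refine ⟨K, fun q x y h => ?_⟩
  have : x.length + y.length ≤ K := hK ⟨(q, x, y), h, rfl⟩
  omega

def SilentlyReachable (A : WKAutomaton T Q) (q : Q) : Prop :=
  Relation.ReflTransGen (fun q p => p ∈ A.δ q [] []) A.q0 q

theorem SilentlyReachable.reflTransGen_step {A : WKAutomaton T Q} {q : Q}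
    (h : A.SilentlyReachable q) (w : List T) : Relation.ReflTransGen A.Step (A.q0, w) (q, w) := by
  induction h with
  | refl => rfl
  | tail _ hp ih => exact ih.tail (by simpa using step_of_mem_delta hp w)

theorem AllFinal.exists_read_mem_lang {A : WKAutomaton T Q} (hA : A.AllFinal) {w : List T}
    (hw : w ∈ A.Lang) (hne : w ≠ []) :
    ∃ q p x y u, p ∈ A.δ q x y ∧ w = x ++ u ++ y ∧ x ++ y ≠ [] ∧ x ++ y ∈ A.Lang := by
  obtain ⟨qf, -, hrun⟩ := hw
  suffices ∀ c, Relation.ReflTransGen A.Step c (qf, []) → c.2 = w → A.SilentlyReachable c.1 →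
      ∃ q p x y u, p ∈ A.δ q x y ∧ w = x ++ u ++ y ∧ x ++ y ≠ [] ∧ x ++ y ∈ A.Lang from
    this _ hrun rfl .refl
  intro c hc
  induction hc using Relation.ReflTransGen.head_induction_on with
  | refl => exact fun h => absurd h.symm hne
  | @head c c' hstep _ ih =>
    rintro rfl hreach
    obtain ⟨x, y, hsplit, hδ⟩ := hstep
    by_cases hxy : x ++ y = []
    · obtain ⟨rfl, rfl⟩ := List.append_eq_nil_iff.mp hxy
      simp only [List.nil_append, List.append_nil] at hsplit
      exact ih hsplit.symm (hreach.tail hδ)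
    · refine ⟨c.1, c'.1, x, y, c'.2, hδ, hsplit, hxy, c'.1, hA ▸ trivial, ?_⟩
      exact (hreach.reflTransGen_step _).tail (by simpa using step_of_mem_delta hδ [])

end WKAutomaton

theorem AcceptsWith.mono {T : Type} {P P' : ∀ Q : Type, WKAutomaton T Q → Prop}
    {L : Set (List T)} (hP : ∀ Q A, P Q A → P' Q A) (h : AcceptsWith T P L) :
    AcceptsWith T P' L :=
  let ⟨Q, hQ, A, hA, hL⟩ := h
  ⟨Q, hQ, A, hP Q A hA, hL⟩

namespace DFA

variable {α σ : Type} [Finite α] [Finite σ]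

def toWKAutomaton (M : DFA α σ) : WKAutomaton α σ where
  q0 := M.start
  F := M.accept
  δ q x y := {p | ∃ c, x = [c] ∧ y = [] ∧ p = M.step q c}
  finite_delta := by
    refine (Set.finite_range fun s : σ × α => (s.1, [s.2], ([] : List α))).subset ?_
    rintro ⟨q, x, y⟩ ⟨p, c, rfl, rfl, -⟩
    exact ⟨(q, c), rfl⟩

variable (M : DFA α σ)

theorem toWKAutomaton_oneLimited : M.toWKAutomaton.OneLimited := by
  rintro q x y ⟨p, c, rfl, rfl, -⟩
  exact Or.inr ⟨rfl, rfl⟩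

theorem toWKAutomaton_step_iff {q p : σ} {w u : List α} :
    M.toWKAutomaton.Step (q, w) (p, u) ↔ ∃ c, w = c :: u ∧ p = M.step q c := by
  constructor
  · rintro ⟨x, y, hw, c, rfl, rfl, hp⟩
    exact ⟨c, by simpa using hw, hp⟩
  · rintro ⟨c, rfl, rfl⟩
    exact ⟨[c], [], by simp, c, rfl, rfl, rfl⟩

theorem toWKAutomaton_quasiDet : M.toWKAutomaton.QuasiDet := by
  intro q w p r u v hp hr
  obtain ⟨c, rfl, rfl⟩ := M.toWKAutomaton_step_iff.mp hp
  obtain ⟨d, hw, rfl⟩ := M.toWKAutomaton_step_iff.mp hr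
  rw [(List.cons_eq_cons.mp hw).1]

theorem toWKAutomaton_reflTransGen_iff {q p : σ} {w : List α} :
    Relation.ReflTransGen M.toWKAutomaton.Step (q, w) (p, []) ↔ M.evalFrom q w = p := by
  constructor
  · intro h
    generalize hc : (q, w) = c at h
    induction h using Relation.ReflTransGen.head_induction_on generalizing q w with
    | refl => cases hc; rfl
    | @head c c' hstep _ ih =>
      subst hc
      obtain ⟨a, rfl, hc'⟩ := M.toWKAutomaton_step_iff.mp hstep
      rw [evalFrom_cons, ← hc']
      exact ih rfl
  · rintro rfl
    induction w generalizing q with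
    | nil => rfl
    | cons c w ih =>
      exact .head (M.toWKAutomaton_step_iff.mpr ⟨c, rfl, rfl⟩) (ih (q := M.step q c))

theorem mem_toWKAutomaton_lang {w : List α} :
    w ∈ M.toWKAutomaton.Lang ↔ M.eval w ∈ M.accept := by
  refine ⟨fun ⟨qf, hqf, h⟩ => ?_, fun h => ⟨_, h, M.toWKAutomaton_reflTransGen_iff.mpr rfl⟩⟩
  obtain rfl := M.toWKAutomaton_reflTransGen_iff.mp h
  exact hqf

end DFA

theorem List.IsPrefix.eq_replicate_of_length_le {α : Type} {x l : List α} {c : α} {N : ℕ}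
    (h : x <+: List.replicate N c ++ l) (hx : x.length ≤ N) : x = List.replicate x.length c := by
  rw [List.prefix_iff_eq_take, List.take_append_of_le_length (by simpa using hx),
    List.take_replicate, min_eq_left hx] at h
  exact h

theorem List.IsSuffix.eq_replicate_of_length_le {α : Type} {y l : List α} {c : α} {N : ℕ}
    (h : y <:+ l ++ List.replicate N c) (hy : y.length ≤ N) : y = List.replicate y.length c := by
  have h' : y.reverse <+: List.replicate N c ++ l.reverse := by
    simpa using List.reverse_prefix.mpr h
  simpa using congrArg List.reverse (h'.eq_replicate_of_length_le (by simpa using hy))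

theorem eq_replicate_b_of_count_a_eq_zero {w : List Letter} (h : w.count a = 0) :
    w = List.replicate w.length b := by
  refine List.eq_replicate_iff.mpr ⟨rfl, fun c hc => ?_⟩
  cases c
  · exact absurd hc (List.count_eq_zero.mp h)
  · rfl

theorem mem_Lbab_iff_count_eq_one {w : List Letter} : w ∈ Lbab ↔ w.count a = 1 := by
  constructor
  · rintro ⟨i, j, rfl⟩
    simp [List.count_replicate]
  · intro h
    obtain ⟨s, t, rfl⟩ := List.append_of_mem (List.count_pos_iff.mp (h ▸ Nat.one_pos))
    simp only [List.count_append, List.count_cons_self] at h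
    refine ⟨s.length, t.length, ?_⟩
    rw [← eq_replicate_b_of_count_a_eq_zero (w := s) (by omega),
      ← eq_replicate_b_of_count_a_eq_zero (w := t) (by omega)]

def countA : DFA Letter (Fin 3) where
  step q c := if c = a then ⟨min (q + 1) 2, by omega⟩ else q
  start := 0
  accept := {1}

theorem countA_evalFrom (q : Fin 3) (w : List Letter) :
    (countA.evalFrom q w : ℕ) = min (q + w.count a) 2 := by
  induction w generalizing q with
  | nil => simpa using q.is_le
  | cons c w ih =>
    rw [DFA.evalFrom_cons, ih, List.count_cons]
    cases c
    · simp only [countA, if_true, beq_self_eq_true, Fin.val_mk]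
      omega
    · simp [countA]

theorem countA_eval_eq_one_iff (w : List Letter) : countA.eval w = 1 ↔ w ∈ Lbab := by
  rw [mem_Lbab_iff_count_eq_one, DFA.eval, Fin.ext_iff, countA_evalFrom]
  simp only [countA, Fin.val_zero, Fin.val_one, zero_add]
  omega

theorem not_acceptsWith_allFinal_Lbab :
    ¬ AcceptsWith Letter (fun _ A => A.AllFinal) Lbab := by
  rintro ⟨Q, -, A, hA, hL⟩
  obtain ⟨K, hK⟩ := A.exists_read_length_le
  set w := List.replicate (K + 1) b ++ a :: List.replicate (K + 1) b
  have hw : w ∈ A.Lang := (hL w (by simp [w])).mpr ⟨K + 1, K + 1, rfl⟩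
  obtain ⟨q, p, x, y, u, hδ, hsplit, hxy, hxyL⟩ := hA.exists_read_mem_lang hw (by simp [w])
  obtain ⟨hxK, hyK⟩ := hK q x y ⟨p, hδ⟩
  have hx : x = List.replicate x.length b :=
    List.IsPrefix.eq_replicate_of_length_le (N := K + 1) (l := a :: List.replicate (K + 1) b)
      ⟨u ++ y, by rw [← List.append_assoc, ← hsplit]⟩ (by omega)
  have hy : y = List.replicate y.length b :=
    List.IsSuffix.eq_replicate_of_length_le (N := K + 1) (l := List.replicate (K + 1) b ++ [a])
      ⟨x ++ u, by simp [← hsplit, w]⟩ (by omega)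
  have := mem_Lbab_iff_count_eq_one.mp ((hL _ hxy).mp hxyL)
  rw [hx, hy, List.count_append] at this
  simp [List.count_replicate] at this

/-- The class of languages accepted by quasi-deterministic simple (qDS) sensing
5'→3' WK automata properly includes the class of languages accepted by
quasi-deterministic all-final simple (qDFS) sensing 5'→3' WK automata: every
qDFS automaton is a qDS automaton (and every 1-limited automaton is simple),
and `b*ab*` is accepted by a quasi-deterministic 1-limited (hence simple)
sensing 5'→3' WK automaton, but by no quasi-deterministic all-final sensing
5'→3' WK automaton. -/
theorem qDFS_proper_subset_qDS :
    (∀ (T Q : Type) (A : WKAutomaton T Q), A.OneLimited → A.Simple) ∧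
    (∀ (T : Type) (L : Set (List T)),
      AcceptsWith T (fun _ A => A.QuasiDet ∧ A.AllFinal ∧ A.Simple) L →
      AcceptsWith T (fun _ A => A.QuasiDet ∧ A.Simple) L) ∧
    AcceptsWith Letter (fun _ A => A.QuasiDet ∧ A.OneLimited) Lbab ∧
    ¬ AcceptsWith Letter (fun _ A => A.QuasiDet ∧ A.AllFinal) Lbab :=
  ⟨fun _ _ _ => WKAutomaton.OneLimited.simple,
    fun _ _ => AcceptsWith.mono fun _ _ h => ⟨h.1, h.2.2⟩,
    ⟨Fin 3, inferInstance, countA.toWKAutomaton,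
      ⟨countA.toWKAutomaton_quasiDet, countA.toWKAutomaton_oneLimited⟩,
      fun w _ => countA.mem_toWKAutomaton_lang.trans (countA_eval_eq_one_iff w)⟩,
    fun h => not_acceptsWith_allFinal_Lbab (h.mono fun _ _ h => h.2)⟩
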